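/- Let P and Q be two Pauli strings on n qubits. Call a position i ∈ Fin n anticommuting for (P, Q) if P i and Q i are two distinct matrices among {X, Y, Z}. Then the Kronecker-product operators of P and Q commute if and only if the number of anticommuting positions is even; moreover, if the number of anticommuting positions is odd, the two operators anticommute. -/

import Mathlib

open Matrix

noncomputable section

/-- The 2×2 identity matrix. -/
def pI : Matrix (Fin 2) (Fin 2) ℂ := 1

/-- The Pauli X matrix. -/
def pX : Matrix (Fin 2) (Fin 2) ℂ := !![0, 1; 1, 0]

/-- The Pauli Y matrix. -/
def pY : Matrix (Fin 2) (Fin 2) ℂ := !![0, -Complex.I; Complex.I, 0]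

/-- The Pauli Z matrix. -/
def pZ : Matrix (Fin 2) (Fin 2) ℂ := !![1, 0; 0, -1]

/-- A Pauli string on `n` qubits: each tensor factor is one of `I, X, Y, Z`. -/
def IsPauliString {n : ℕ} (s : Fin n → Matrix (Fin 2) (Fin 2) ℂ) : Prop :=
  ∀ i, s i = pI ∨ s i = pX ∨ s i = pY ∨ s i = pZ

/-- The Kronecker (tensor) product of a family of 2×2 matrices, as a matrix
indexed by tuples of indices. -/
def kron {n : ℕ} (s : Fin n → Matrix (Fin 2) (Fin 2) ℂ) :
    Matrix (Fin n → Fin 2) (Fin n → Fin 2) ℂ :=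
  Matrix.of fun x y => ∏ i, s i (x i) (y i)

/-- Two Pauli strings commute if their associated Kronecker-product operators commute. -/
def PauliCommute {n : ℕ} (P Q : Fin n → Matrix (Fin 2) (Fin 2) ℂ) : Prop :=
  kron P * kron Q = kron Q * kron P

/-- The commutation graph of a finite set of Pauli strings: two distinct strings are
adjacent iff their associated operators do not commute. -/
def commutationGraph {n : ℕ} (S : Finset (Fin n → Matrix (Fin 2) (Fin 2) ℂ)) :
    SimpleGraph {P // P ∈ S} where
  Adj P Q := P ≠ Q ∧ ¬ PauliCommute P.1 Q.1
  symm := by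
    constructor
    intro P Q h
    exact ⟨h.1.symm, fun hc => h.2 hc.symm⟩
  loopless := ⟨fun P h => h.1 rfl⟩

lemma pauli_neq : pX ≠ pI ∧ pY ≠ pI ∧ pZ ≠ pI ∧ pX ≠ pY ∧ pX ≠ pZ ∧ pY ≠ pZ := by
  refine ⟨?_,?_,?_,?_,?_,?_⟩ <;>
  · simp only [pX, pY, pZ, pI, Matrix.one_fin_two, ne_eq, ← Matrix.ext_iff, Fin.forall_fin_two,
      not_forall]
    norm_num [Complex.ext_iff]

lemma pauli_sign (A B : Matrix (Fin 2) (Fin 2) ℂ)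
    (hA : A = pI ∨ A = pX ∨ A = pY ∨ A = pZ) (hB : B = pI ∨ B = pX ∨ B = pY ∨ B = pZ) :
    A * B = (if A ≠ pI ∧ B ≠ pI ∧ A ≠ B then (-1:ℂ) else 1) • (B * A) := by
  obtain ⟨h1,h2,h3,h4,h5,h6⟩ := pauli_neq
  rcases hA with h|h|h|h <;> rcases hB with h'|h'|h'|h' <;> subst h h' <;>
    simp only [ne_eq, h1, h2, h3, h4, h5, h6, h1.symm, h2.symm, h3.symm, h4.symm, h5.symm,
      h6.symm, not_false_eq_true, not_true_eq_false, true_and, and_true, and_self, and_false,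
      false_and, if_true, if_false, one_smul, neg_smul] <;>
    simp [pI, pX, pY, pZ, Matrix.mul_fin_two, Matrix.one_fin_two,
      Complex.ext_iff, ← Matrix.ext_iff, Fin.forall_fin_two]

lemma pauli_sq (A : Matrix (Fin 2) (Fin 2) ℂ)
    (hA : A = pI ∨ A = pX ∨ A = pY ∨ A = pZ) : A * A = 1 := by
  rcases hA with h|h|h|h <;> subst h <;>
    simp [pI, pX, pY, pZ, Matrix.mul_fin_two, Matrix.one_fin_two,
      Complex.ext_iff, ← Matrix.ext_iff, Fin.forall_fin_two]

lemma kron_mul {n : ℕ} (s t : Fin n → Matrix (Fin 2) (Fin 2) ℂ) :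
    kron s * kron t = kron fun i => s i * t i := by
  ext x y
  show (∑ j, kron s x j * kron t j y) = ∏ i, (s i * t i) (x i) (y i)
  simp only [kron, of_apply, Matrix.mul_apply, ← Finset.prod_mul_distrib]
  rw [Finset.prod_univ_sum, Fintype.piFinset_univ]

lemma kron_one {n : ℕ} : kron (fun _ : Fin n => (1 : Matrix (Fin 2) (Fin 2) ℂ)) = 1 := by
  ext x y
  simp only [kron, of_apply, Matrix.one_apply]
  by_cases h : x = y
  · subst h; simp
  · rw [if_neg h]
    obtain ⟨i, hi⟩ := Function.ne_iff.mp h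
    exact Finset.prod_eq_zero (Finset.mem_univ i) (by simp [Matrix.one_apply, hi])

/-- **Commutation criterion for Pauli strings.** -/
theorem pauli_commute_iff_even_anticommuting {n : ℕ}
    (P Q : Fin n → Matrix (Fin 2) (Fin 2) ℂ)
    (hP : IsPauliString P) (hQ : IsPauliString Q) :
    (kron P * kron Q = kron Q * kron P ↔
      Even {i : Fin n | P i ≠ pI ∧ Q i ≠ pI ∧ P i ≠ Q i}.ncard) ∧
    (Odd {i : Fin n | P i ≠ pI ∧ Q i ≠ pI ∧ P i ≠ Q i}.ncard →
      kron P * kron Q = -(kron Q * kron P)) := by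
  classical
  set cond : Fin n → Prop := fun i => P i ≠ pI ∧ Q i ≠ pI ∧ P i ≠ Q i with hcond
  set m := (Finset.univ.filter cond).card with hmdef
  have hm : {i : Fin n | P i ≠ pI ∧ Q i ≠ pI ∧ P i ≠ Q i}.ncard = m := by
    rw [hmdef, ← Set.ncard_coe_finset]
    congr 1
    ext i
    simp [hcond]
  -- key sign identity
  have key : kron P * kron Q = ((-1:ℂ)^m) • (kron Q * kron P) := by
    rw [kron_mul, kron_mul]
    have hfun : (fun i => P i * Q i)
        = fun i => (if cond i then (-1:ℂ) else 1) • (Q i * P i) := by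
      funext i
      exact pauli_sign _ _ (hP i) (hQ i)
    rw [hfun]
    ext x y
    simp only [kron, of_apply, Matrix.smul_apply, smul_eq_mul]
    rw [Finset.prod_mul_distrib, Finset.prod_ite, Finset.prod_const, Finset.prod_const,
      one_pow, mul_one]
  -- the product of the kron operators is invertible, hence nonzero
  have hunit : (kron Q * kron P) * (kron P * kron Q) = 1 := by
    rw [kron_mul, kron_mul, kron_mul]
    have : (fun i => (Q i * P i) * (P i * Q i)) = fun _ => (1 : Matrix (Fin 2) (Fin 2) ℂ) := by
      funext i
      rw [mul_assoc (Q i) (P i) (P i * Q i), ← mul_assoc (P i) (P i) (Q i),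
        pauli_sq (P i) (hP i), one_mul, pauli_sq (Q i) (hQ i)]
    rw [this, kron_one]
  have hne : kron Q * kron P ≠ 0 := by
    intro h0
    rw [h0, zero_mul] at hunit
    exact one_ne_zero hunit.symm
  rw [hm]
  constructor
  · constructor
    · intro hcomm
      by_contra hodd
      rw [Nat.not_even_iff_odd] at hodd
      rw [hodd.neg_one_pow, neg_smul, one_smul] at key
      have hz : kron Q * kron P = 0 := by
        have h2 : (2:ℂ) • (kron Q * kron P) = 0 := by
          rw [two_smul]
          calc kron Q * kron P + kron Q * kron P
              = kron P * kron Q + kron P * kron Q := by rw [hcomm]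
            _ = -(kron Q * kron P) + kron P * kron Q := by rw [← key]
            _ = -(kron Q * kron P) + kron Q * kron P := by rw [hcomm]
            _ = 0 := neg_add_cancel _
        have := smul_eq_zero.mp h2
        simpa using this
      exact hne hz
    · intro heven
      rw [heven.neg_one_pow, one_smul] at key
      exact key
  · intro hodd
    rw [hodd.neg_one_pow, neg_smul, one_smul] at key
    exact key
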